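/- Let M be a nonnegative supermartingale on 2^{≤n}, M̂ the martingale generated by M↾2^n (agreeing with M on 2^n), and ΔM = M − M̂ ≥ 0. Then ΔM is itself a nonnegative supermartingale on 2^{≤n}, and for any refining sequence B̃₀,...,B̃_m of prefix-free covers with B̃_t ⊆ 2^{≤n}, Σ_{ρ∈B̃_{t}} 2^{−|ρ|}·E(ΔM | B̃_ρ) ≤ ΔM(ε) for each t < m, where B̃_ρ = B̃_{t+1}∩[ρ]^⪯. -/
import Mathlib


open Finset

noncomputable section

/-- Measure (weight) of a binary string. -/
def wt (σ : List Bool) : ℝ := ((2 : ℝ)⁻¹) ^ σ.length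

/-- Measure of a finite set of binary strings. -/
def mea (B : Finset (List Bool)) : ℝ := ∑ σ ∈ B, wt σ

/-- Conditional average of `f` on the set `B`. -/
def condE (f : List Bool → ℝ) (B : Finset (List Bool)) : ℝ :=
  (∑ σ ∈ B, f σ * wt σ) / mea B

/-- A set of strings is prefix-free: no element is a proper prefix of another. -/
def PrefixFree (B : Finset (List Bool)) : Prop :=
  ∀ σ ∈ B, ∀ τ ∈ B, σ <+: τ → σ = τ


lemma wt_pos (σ : List Bool) : 0 < wt σ := by
  unfold wt; positivity

lemma wt_append (ρ : List Bool) (b : Bool) : wt (ρ ++ [b]) = wt ρ / 2 := by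
  unfold wt
  rw [List.length_append]
  simp [pow_succ]
  ring

/-- Key lemma: sum of f·wt over a prefix-free set of extensions of ρ is ≤ f ρ · wt ρ. -/
lemma key (n : ℕ) (f : List Bool → ℝ)
    (hnn : ∀ σ : List Bool, σ.length ≤ n → 0 ≤ f σ)
    (hsm : ∀ σ : List Bool, σ.length < n →
      f (σ ++ [false]) + f (σ ++ [true]) ≤ 2 * f σ) :
    ∀ k (ρ : List Bool), ρ.length + k = n → ∀ C : Finset (List Bool),
      PrefixFree C → (∀ σ ∈ C, ρ <+: σ ∧ σ.length ≤ n) →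
      ∑ σ ∈ C, f σ * wt σ ≤ f ρ * wt ρ := by
  intro k
  induction k with
  | zero =>
    intro ρ hρ C hpf hC
    have hsub : C ⊆ {ρ} := by
      intro σ hσ
      obtain ⟨hpre, hle⟩ := hC σ hσ
      have : ρ.length = σ.length :=
        le_antisymm (List.IsPrefix.length_le hpre) (by omega)
      simp [List.IsPrefix.eq_of_length hpre this]
    calc ∑ σ ∈ C, f σ * wt σ ≤ ∑ σ ∈ ({ρ} : Finset (List Bool)), f σ * wt σ := by
          apply Finset.sum_le_sum_of_subset_of_nonneg hsub
          intro σ hσ _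
          have : σ = ρ := by simpa using hσ
          subst this
          exact mul_nonneg (hnn σ (by omega)) (wt_pos σ).le
      _ = f ρ * wt ρ := by simp
  | succ k ih =>
    intro ρ hρ C hpf hC
    by_cases hmem : ρ ∈ C
    · have hsub : C ⊆ {ρ} := by
        intro σ hσ
        simp [(hpf ρ hmem σ hσ (hC σ hσ).1).symm]
      calc ∑ σ ∈ C, f σ * wt σ ≤ ∑ σ ∈ ({ρ} : Finset (List Bool)), f σ * wt σ := by
            apply Finset.sum_le_sum_of_subset_of_nonneg hsub
            intro σ hσ _
            have : σ = ρ := by simpa using hσ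
            subst this
            exact mul_nonneg (hnn σ (by omega)) (wt_pos σ).le
        _ = f ρ * wt ρ := by simp
    · -- every element of C properly extends ρ
      have hext : ∀ σ ∈ C, (ρ ++ [false] <+: σ) ∨ (ρ ++ [true] <+: σ) := by
        intro σ hσ
        obtain ⟨⟨s, hs⟩, hle⟩ := hC σ hσ
        cases s with
        | nil =>
            have : σ = ρ := by simpa using hs.symm
            exact absurd (this ▸ hσ) hmem
        | cons b rest =>
          cases b with
          | false => left; exact ⟨rest, by simp [← hs]⟩
          | true => right; exact ⟨rest, by simp [← hs]⟩
      set C0 := C.filter (fun σ => ρ ++ [false] <+: σ) with hC0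
      set C1 := C.filter (fun σ => ¬ (ρ ++ [false] <+: σ)) with hC1
      have hpf0 : PrefixFree C0 := fun σ hσ τ hτ h =>
        hpf σ (Finset.mem_filter.mp hσ).1 τ (Finset.mem_filter.mp hτ).1 h
      have hpf1 : PrefixFree C1 := fun σ hσ τ hτ h =>
        hpf σ (Finset.mem_filter.mp hσ).1 τ (Finset.mem_filter.mp hτ).1 h
      have hlen0 : (ρ ++ [false]).length + k = n := by simp; omega
      have hlen1 : (ρ ++ [true]).length + k = n := by simp; omega
      have h0 := ih (ρ ++ [false]) hlen0 C0 hpf0 (by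
        intro σ hσ
        obtain ⟨hσC, hpre⟩ := Finset.mem_filter.mp hσ
        exact ⟨hpre, (hC σ hσC).2⟩)
      have h1 := ih (ρ ++ [true]) hlen1 C1 hpf1 (by
        intro σ hσ
        obtain ⟨hσC, hpre⟩ := Finset.mem_filter.mp hσ
        refine ⟨?_, (hC σ hσC).2⟩
        rcases hext σ hσC with h | h
        · exact absurd h hpre
        · exact h)
      have hsplit : ∑ σ ∈ C, f σ * wt σ =
          ∑ σ ∈ C0, f σ * wt σ + ∑ σ ∈ C1, f σ * wt σ :=
        (Finset.sum_filter_add_sum_filter_not C _ _).symm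
      have hρlt : ρ.length < n := by omega
      have := hsm ρ hρlt
      rw [hsplit]
      have e0 : wt (ρ ++ [false]) = wt ρ / 2 := wt_append ρ false
      have e1 : wt (ρ ++ [true]) = wt ρ / 2 := wt_append ρ true
      have hw := wt_pos ρ
      rw [e0] at h0
      rw [e1] at h1
      nlinarith [mul_le_mul_of_nonneg_right this hw.le]

/-- The difference `ΔM = M − M̂` of a supermartingale and its generated martingale
is itself a nonnegative supermartingale, and the averaged conditional expectations
of `ΔM` along any refining sequence of prefix-free covers are bounded by `ΔM(ε)`. -/
theorem deltaM_supermartingale (n m : ℕ) (M Mh : List Bool → ℝ)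
    (hnn : ∀ σ : List Bool, σ.length ≤ n → 0 ≤ M σ)
    (hsm : ∀ σ : List Bool, σ.length < n →
      M (σ ++ [false]) + M (σ ++ [true]) ≤ 2 * M σ)
    (hmart : ∀ σ : List Bool, σ.length < n →
      Mh (σ ++ [false]) + Mh (σ ++ [true]) = 2 * Mh σ)
    (hagree : ∀ σ : List Bool, σ.length = n → Mh σ = M σ)
    (hdom : ∀ σ : List Bool, σ.length ≤ n → 0 ≤ Mh σ ∧ Mh σ ≤ M σ)
    (B : Fin (m + 1) → Finset (List Bool))
    (hlen : ∀ t, ∀ ρ ∈ B t, ρ.length ≤ n)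
    (hpf : ∀ t, PrefixFree (B t))
    (hcover : ∀ t, mea (B t) = 1)
    (hrefine : ∀ t : Fin m, ∀ σ ∈ B t.succ, ∃ ρ ∈ B t.castSucc, ρ <+: σ) :
    (∀ σ : List Bool, σ.length ≤ n → 0 ≤ M σ - Mh σ) ∧
    (∀ σ : List Bool, σ.length < n →
      (M (σ ++ [false]) - Mh (σ ++ [false])) + (M (σ ++ [true]) - Mh (σ ++ [true]))
        ≤ 2 * (M σ - Mh σ)) ∧
    (∀ t : Fin m,
      ∑ ρ ∈ B t.castSucc,
          wt ρ * condE (fun σ => M σ - Mh σ) ((B t.succ).filter (fun σ => ρ <+: σ))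
        ≤ M [] - Mh []) := by
  set f : List Bool → ℝ := fun σ => M σ - Mh σ with hf
  have hfnn : ∀ σ : List Bool, σ.length ≤ n → 0 ≤ f σ := by
    intro σ hσ
    have := hdom σ hσ
    simp only [hf]
    linarith [this.2]
  have hfsm : ∀ σ : List Bool, σ.length < n →
      f (σ ++ [false]) + f (σ ++ [true]) ≤ 2 * f σ := by
    intro σ hσ
    have h1 := hsm σ hσ
    have h2 := hmart σ hσ
    simp only [hf]
    linarith
  refine ⟨hfnn, hfsm, ?_⟩
  intro t
  set A := B t.castSucc with hA
  set D := B t.succ with hD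
  -- fibers
  set fib : List Bool → Finset (List Bool) := fun ρ => D.filter (fun σ => ρ <+: σ) with hfib
  -- pairwise disjointness of fibers over A
  have hdisj : (↑A : Set (List Bool)).PairwiseDisjoint fib := by
    intro ρ₁ h₁ ρ₂ h₂ hne
    refine Finset.disjoint_left.mpr ?_
    intro σ hσ₁ hσ₂
    obtain ⟨_, hp₁⟩ := Finset.mem_filter.mp hσ₁
    obtain ⟨_, hp₂⟩ := Finset.mem_filter.mp hσ₂
    rcases List.prefix_or_prefix_of_prefix hp₁ hp₂ with h | h
    · exact hne (hpf _ ρ₁ h₁ ρ₂ h₂ h)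
    · exact hne ((hpf _ ρ₂ h₂ ρ₁ h₁ h).symm)
  -- D is the biUnion of fibers
  have hbi : D = A.biUnion fib := by
    apply Finset.ext
    intro σ
    constructor
    · intro hσ
      obtain ⟨ρ, hρ, hpre⟩ := hrefine t σ hσ
      exact Finset.mem_biUnion.mpr ⟨ρ, hρ, Finset.mem_filter.mpr ⟨hσ, hpre⟩⟩
    · intro hσ
      obtain ⟨ρ, _, hσ'⟩ := Finset.mem_biUnion.mp hσ
      exact (Finset.mem_filter.mp hσ').1
  -- Kraft: mea (fib ρ) ≤ wt ρ for ρ ∈ A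
  have hkraft : ∀ ρ ∈ A, mea (fib ρ) ≤ wt ρ := by
    intro ρ hρ
    have hρn : ρ.length ≤ n := hlen _ ρ hρ
    have := key n (fun _ => 1) (fun _ _ => zero_le_one)
      (fun _ _ => by norm_num) (n - ρ.length) ρ (by omega) (fib ρ)
      (fun σ hσ τ hτ h => hpf _ σ (Finset.mem_filter.mp hσ).1 τ (Finset.mem_filter.mp hτ).1 h)
      (fun σ hσ => ⟨(Finset.mem_filter.mp hσ).2, hlen _ σ (Finset.mem_filter.mp hσ).1⟩)
    simpa [mea] using this
  -- sum of fiber measures equals 1 = sum of wt over A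
  have hsum_mea : ∑ ρ ∈ A, mea (fib ρ) = ∑ ρ ∈ A, wt ρ := by
    have h1 : ∑ ρ ∈ A, mea (fib ρ) = mea D := by
      rw [hbi]
      exact (Finset.sum_biUnion hdisj).symm
    rw [h1, hcover]
    exact (hcover _).symm
  have hmea_eq : ∀ ρ ∈ A, mea (fib ρ) = wt ρ :=
    (Finset.sum_eq_sum_iff_of_le hkraft).mp hsum_mea
  -- rewrite each term
  have hterm : ∀ ρ ∈ A, wt ρ * condE f (fib ρ) = ∑ σ ∈ fib ρ, f σ * wt σ := by
    intro ρ hρ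
    rw [condE, hmea_eq ρ hρ]
    rw [mul_div_assoc', mul_div_cancel_left₀ _ (wt_pos ρ).ne']
  calc ∑ ρ ∈ A, wt ρ * condE f (fib ρ)
      = ∑ ρ ∈ A, ∑ σ ∈ fib ρ, f σ * wt σ := Finset.sum_congr rfl hterm
    _ = ∑ σ ∈ D, f σ * wt σ := by rw [hbi]; exact (Finset.sum_biUnion hdisj).symm
    _ ≤ f [] * wt [] := by
        apply key n f hfnn hfsm n [] (by simp) D (hpf _)
        intro σ hσ
        exact ⟨List.nil_prefix, hlen _ σ hσ⟩
    _ = M [] - Mh [] := by simp [wt, hf]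

end
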